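/- arXiv:1301.1140 — 2 statements merged into one kernel-verified Lean document; each statement's English description precedes it below -/
import Mathlib

section
/- Let V be a real vector space, Y ⊆ X ⊆ V, and 𝔸 an additive subgroup of (ℝ,+) with 1 ∈ 𝔸. Define the 𝔸-convex hull conv_𝔸(Y) := {ℓ⃗(f) : f ∈ Fin(Y, 𝔸 ∩ [0,1]) with ℓ(f) = 1}. Then Y is a positive weak 𝔸-face of X if and only if Y is a weak 𝔸-face of both X and X ∪ {0}, and 0 ∉ conv_𝔸(Y). -/
open Finsupp

/-- `R₊ := R ∩ [0,∞)`. -/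
def Rplus (R : Set ℝ) : Set ℝ := R ∩ Set.Ici 0

/-- `ℓ(f) := Σ_v f(v)`. -/
noncomputable def ell {V : Type*} [AddCommGroup V] [Module ℝ V] (f : V →₀ ℝ) : ℝ :=
  f.sum fun _ r => r

/-- `ℓ⃗(f) := Σ_v f(v) • v`. -/
noncomputable def vell {V : Type*} [AddCommGroup V] [Module ℝ V] (f : V →₀ ℝ) : V :=
  f.sum fun v r => r • v

/-- `f ∈ Fin(X,R)`: finitely supported, support in `X`, values in `R ∪ {0}`. -/
def IsFinSupp {V : Type*} [AddCommGroup V] [Module ℝ V] (X : Set V) (R : Set ℝ)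
    (f : V →₀ ℝ) : Prop :=
  ↑f.support ⊆ X ∧ ∀ v, f v ∈ R ∪ {0}

/-- `Y` is a weak `R`-face of `X`. -/
def IsWeakFace {V : Type*} [AddCommGroup V] [Module ℝ V] (X Y : Set V) (R : Set ℝ) : Prop :=
  ∀ f g : V →₀ ℝ, IsFinSupp X (Rplus R) f → IsFinSupp Y (Rplus R) g →
    ell f = ell g → 0 < ell g → vell f = vell g → ↑f.support ⊆ Y

/-- `Y` is a positive weak `R`-face of `X`. -/
def IsPosWeakFace {V : Type*} [AddCommGroup V] [Module ℝ V] (X Y : Set V) (R : Set ℝ) : Prop :=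
  ∀ f g : V →₀ ℝ, IsFinSupp X (Rplus R) f → IsFinSupp Y (Rplus R) g →
    vell f = vell g → ell g ≤ ell f ∧ (ell g = ell f ↔ ↑f.support ⊆ Y)

/-- `Y` is `(R',R)`-closed in `X`. -/
def IsRClosed {V : Type*} [AddCommGroup V] [Module ℝ V] (X Y : Set V) (R' R : Set ℝ) : Prop :=
  ∀ f g : V →₀ ℝ, IsFinSupp X R f → IsFinSupp Y R g →
    ell f = ell g → ell f ∈ R' → ell f ≠ 0 → vell f = vell g → ↑f.support ⊆ Y

/-- The maximizer set `X(φ)`. -/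
def maximizer {V : Type*} [AddCommGroup V] [Module ℝ V] (X : Set V) (φ : V →ₗ[ℝ] ℝ) : Set V :=
  {x | x ∈ X ∧ ∀ x' ∈ X, φ x' ≤ φ x}

/-!
Comparing `f` with `f` minus its mass at `0` shows that a positive weak face of `X` is a weak face
of `X ∪ {0}`, and comparing a convex combination representing `0` with the zero function rules out
`0 ∈ conv_𝔸(Y)`. Conversely, if `ℓ(g) > ℓ(f)` while `ℓ⃗(f) = ℓ⃗(g)`, then putting the missing mass
`ℓ(g) - ℓ(f) ∈ 𝔸` on the point `0` gives a competitor on `X ∪ {0}`; the weak face property forces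
`0 ∈ Y`, which puts `0 = ℓ⃗(δ₀)` into `conv_𝔸(Y)`.
-/

def rConvexHull {V : Type*} [AddCommGroup V] [Module ℝ V] (Y : Set V) (R : Set ℝ) : Set V :=
  {x | ∃ f : V →₀ ℝ, IsFinSupp Y (R ∩ Set.Icc 0 1) f ∧ ell f = 1 ∧ vell f = x}

section

variable {V : Type*} [AddCommGroup V] [Module ℝ V]

lemma ell_add (f g : V →₀ ℝ) : ell (f + g) = ell f + ell g :=
  Finsupp.sum_add_index' (fun _ => rfl) (fun _ _ _ => rfl)

lemma vell_add (f g : V →₀ ℝ) : vell (f + g) = vell f + vell g :=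
  Finsupp.sum_add_index' (fun v => zero_smul ℝ v) (fun v r s => add_smul r s v)

lemma ell_single (v : V) (c : ℝ) : ell (Finsupp.single v c) = c :=
  Finsupp.sum_single_index rfl

lemma vell_single (v : V) (c : ℝ) : vell (Finsupp.single v c) = c • v :=
  Finsupp.sum_single_index (zero_smul ℝ v)

lemma ell_zero : ell (0 : V →₀ ℝ) = 0 := Finsupp.sum_zero_index

lemma vell_zero : vell (0 : V →₀ ℝ) = 0 := Finsupp.sum_zero_index

lemma ell_erase_add_apply (f : V →₀ ℝ) (v : V) : ell (f.erase v) + f v = ell f := by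
  rw [← ell_single v (f v), ← ell_add, Finsupp.erase_add_single]

lemma vell_erase_zero (f : V →₀ ℝ) : vell (f.erase 0) = vell f := by
  conv_rhs => rw [← Finsupp.erase_add_single 0 f]
  rw [vell_add, vell_single, smul_zero, add_zero]

lemma mem_Rplus_union_zero {A : AddSubgroup ℝ} {r : ℝ} :
    r ∈ Rplus (A : Set ℝ) ∪ {0} ↔ r ∈ A ∧ 0 ≤ r := by
  constructor
  · rintro (h | rfl)
    · exact h
    · exact ⟨A.zero_mem, le_rfl⟩
  · exact Or.inl

namespace IsFinSupp

variable {X X' : Set V} {R : Set ℝ} {f g : V →₀ ℝ}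

lemma mono (hXX' : X ⊆ X') (hf : IsFinSupp X R f) : IsFinSupp X' R f :=
  ⟨hf.1.trans hXX', hf.2⟩

lemma nonneg (hf : IsFinSupp X (Rplus R) f) (v : V) : 0 ≤ f v := by
  rcases hf.2 v with h | h
  · exact h.2
  · exact h.symm.le

lemma ell_nonneg (hf : IsFinSupp X (Rplus R) f) : 0 ≤ ell f :=
  Finset.sum_nonneg fun v _ => hf.nonneg v

lemma eq_zero_of_ell_eq_zero (hf : IsFinSupp X (Rplus R) f) (h : ell f = 0) : f = 0 := by
  ext v
  by_cases hv : v ∈ f.support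
  · exact (Finset.sum_eq_zero_iff_of_nonneg fun w _ => hf.nonneg w).mp h v hv
  · exact Finsupp.notMem_support_iff.mp hv

lemma ell_mem {A : AddSubgroup ℝ} (hf : IsFinSupp X (Rplus (A : Set ℝ)) f) : ell f ∈ A :=
  sum_mem fun v _ => (mem_Rplus_union_zero.mp (hf.2 v)).1

lemma single {v : V} {c : ℝ} (hc : c ∈ R) : IsFinSupp {v} R (Finsupp.single v c) := by
  classical
  refine ⟨fun w hw => Finset.mem_singleton.mp (Finsupp.support_single_subset hw), fun w => ?_⟩
  rw [Finsupp.single_apply]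
  split_ifs
  · exact Or.inl hc
  · exact Or.inr rfl

lemma add {A : AddSubgroup ℝ} (hf : IsFinSupp X (Rplus (A : Set ℝ)) f)
    (hg : IsFinSupp X' (Rplus (A : Set ℝ)) g) :
    IsFinSupp (X ∪ X') (Rplus (A : Set ℝ)) (f + g) := by
  classical
  refine ⟨fun v hv => ?_, fun v => ?_⟩
  · rcases Finset.mem_union.mp (Finsupp.support_add hv) with hv | hv
    · exact Or.inl (hf.1 hv)
    · exact Or.inr (hg.1 hv)
  · obtain ⟨hfA, hf0⟩ := mem_Rplus_union_zero.mp (hf.2 v)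
    obtain ⟨hgA, hg0⟩ := mem_Rplus_union_zero.mp (hg.2 v)
    exact Or.inl ⟨A.add_mem hfA hgA, add_nonneg hf0 hg0⟩

lemma erase {v : V} (hf : IsFinSupp (X ∪ {v}) R f) : IsFinSupp X R (f.erase v) := by
  classical
  refine ⟨fun w hw => ?_, fun w => ?_⟩
  · rw [Finsupp.support_erase, Finset.coe_erase] at hw
    exact (hf.1 hw.1).resolve_right hw.2
  · rw [Finsupp.erase_apply]
    split_ifs
    · exact Or.inr rfl
    · exact hf.2 w

end IsFinSupp

variable {X Y : Set V}

lemma zero_notMem_of_zero_notMem_rConvexHull {A : AddSubgroup ℝ} (h1 : (1 : ℝ) ∈ A)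
    (h : (0 : V) ∉ rConvexHull Y (A : Set ℝ)) : (0 : V) ∉ Y := fun h0 =>
  h ⟨Finsupp.single 0 1,
    (IsFinSupp.single (R := (A : Set ℝ) ∩ Set.Icc 0 1) ⟨h1, by norm_num⟩).mono
      (Set.singleton_subset_iff.mpr h0),
    ell_single 0 1, by rw [vell_single, smul_zero]⟩

namespace IsPosWeakFace

variable {R : Set ℝ}

lemma isWeakFace (h : IsPosWeakFace X Y R) : IsWeakFace X Y R :=
  fun f g hf hg he _ hv => (h f g hf hg hv).2.mp he.symm

lemma isWeakFace_union_zero (h : IsPosWeakFace X Y R) : IsWeakFace (X ∪ {0}) Y R := by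
  intro f g hf hg he _ hv
  obtain ⟨hle, hiff⟩ := h (f.erase 0) g hf.erase hg (by rw [vell_erase_zero, hv])
  have hsplit := ell_erase_add_apply f 0
  have hf0 : f 0 = 0 := by linarith [hf.nonneg 0]
  have herase : f.erase 0 = f := Finsupp.erase_of_notMem_support (by simpa using hf0)
  rw [herase] at hiff
  exact hiff.mp he.symm

lemma zero_notMem_rConvexHull (h : IsPosWeakFace X Y R) : (0 : V) ∉ rConvexHull Y R := by
  rintro ⟨f, ⟨hfY, hfR⟩, hf1, hf0⟩
  have hf : IsFinSupp Y (Rplus R) f :=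
    ⟨hfY, fun v => (hfR v).imp (fun hv => ⟨hv.1, hv.2.1⟩) id⟩
  have hle := (h 0 f ⟨by simp, fun _ => Or.inr rfl⟩ hf (by rw [vell_zero, hf0])).1
  rw [hf1, ell_zero] at hle
  exact absurd hle (by norm_num)

end IsPosWeakFace

namespace IsWeakFace

variable {A : AddSubgroup ℝ}

lemma ell_le (hw : IsWeakFace (X ∪ {0}) Y (A : Set ℝ)) (h0 : (0 : V) ∉ Y) {f g : V →₀ ℝ}
    (hf : IsFinSupp X (Rplus (A : Set ℝ)) f) (hg : IsFinSupp Y (Rplus (A : Set ℝ)) g)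
    (hv : vell f = vell g) : ell g ≤ ell f := by
  by_contra! hlt
  set c := ell g - ell f
  have hc : 0 < c := sub_pos.mpr hlt
  have hf' : IsFinSupp (X ∪ {0}) (Rplus (A : Set ℝ)) (f + Finsupp.single 0 c) :=
    hf.add (IsFinSupp.single ⟨A.sub_mem hg.ell_mem hf.ell_mem, hc.le⟩)
  have hsupp := hw _ g hf' hg (by rw [ell_add, ell_single]; ring)
    (hf.ell_nonneg.trans_lt hlt) (by rw [vell_add, vell_single, smul_zero, add_zero, hv])
  refine h0 (hsupp (Finsupp.mem_support_iff.mpr ?_))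
  simp only [Finsupp.add_apply, Finsupp.single_eq_same]
  linarith [hf.nonneg 0]

lemma isPosWeakFace (hYX : Y ⊆ X) (hX : IsWeakFace X Y (A : Set ℝ))
    (hX0 : IsWeakFace (X ∪ {0}) Y (A : Set ℝ)) (h0 : (0 : V) ∉ Y) :
    IsPosWeakFace X Y (A : Set ℝ) := by
  intro f g hf hg hv
  have hle := hX0.ell_le h0 hf hg hv
  refine ⟨hle, fun he => ?_, fun hsub => ?_⟩
  · rcases hg.ell_nonneg.eq_or_lt with hg0 | hgpos
    · simp [hf.eq_zero_of_ell_eq_zero (he.symm.trans hg0.symm)]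
    · exact hX f g hf hg he.symm hgpos hv
  · exact le_antisymm hle (hX0.ell_le h0 (hg.mono hYX) ⟨hsub, hf.2⟩ hv.symm)

end IsWeakFace

end

/-- For `𝔸` an additive subgroup of `ℝ` with `1 ∈ 𝔸`, `Y` is a positive
weak `𝔸`-face of `X` iff `Y` is a weak `𝔸`-face of both `X` and `X ∪ {0}`, and
`0 ∉ conv_𝔸(Y)`, where `conv_𝔸(Y) = {ℓ⃗(f) : f ∈ Fin(Y, 𝔸 ∩ [0,1]), ℓ(f) = 1}`. -/
theorem statement9 {V : Type*} [AddCommGroup V] [Module ℝ V]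
    (X Y : Set V) (hYX : Y ⊆ X) (𝔸 : AddSubgroup ℝ) (h1 : (1 : ℝ) ∈ 𝔸) :
    IsPosWeakFace X Y (𝔸 : Set ℝ) ↔
      IsWeakFace X Y (𝔸 : Set ℝ) ∧ IsWeakFace (X ∪ {0}) Y (𝔸 : Set ℝ) ∧
        (0 : V) ∉ {x : V | ∃ f : V →₀ ℝ,
          IsFinSupp Y ((𝔸 : Set ℝ) ∩ Set.Icc (0 : ℝ) 1) f ∧ ell f = 1 ∧ vell f = x} := by
  refine ⟨fun h => ⟨h.isWeakFace, h.isWeakFace_union_zero, h.zero_notMem_rConvexHull⟩, ?_⟩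
  rintro ⟨hX, hX0, hconv⟩
  exact hX.isPosWeakFace hYX hX0 (zero_notMem_of_zero_notMem_rConvexHull h1 hconv)
end

section
/- Let V be a real vector space, Δ ⊆ V a finite linearly independent subset, J ⊆ Δ, and 𝔸 a nonzero additive subgroup of (ℝ,+) such that a·𝔸 ⊆ 𝔸 for some nonzero a ∈ 𝔸. Suppose λ = Σ_{α∈Δ} e_α α with all e_α ∈ 𝔸 and e_α ≤ 0 for every α ∈ Δ ∖ J. Let X ⊆ λ − ℤ₊Δ be a subset with λ ∈ X and λ − α ∈ X for every α ∈ Δ. Then X ∩ (λ − ℤ₊J) is NOT a positive weak 𝔸-face of X. -/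
open Finsupp

/-!
Let `t < 0` be an element of `𝔸` with `t𝔸 ⊆ 𝔸` (e.g. `t = -a²`). The signed combination
`h = t (1 - Σ e_α) [λ] + Σ t e_α [λ - α]` has `ℓ⃗(h) = t (λ - Σ e_α α) = 0` and `ℓ(h) = t < 0`,
and all its values lie in `𝔸`. Its negative part is carried by `λ` and by those `λ - α` with
`e_α > 0`, i.e. with `α ∈ J`, hence by `X ∩ (λ - ℤ₊J)`, while its positive part is carried by `X`.
Comparing the two parts contradicts `ℓ(g) ≤ ℓ(f)` in the definition of a positive weak face.
-/

section WeakFace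

variable {V : Type*} [AddCommGroup V] [Module ℝ V]

lemma ell_eq_linearCombination (f : V →₀ ℝ) :
    ell f = linearCombination ℝ (fun _ => (1 : ℝ)) f := by
  simp [ell, linearCombination_apply]

lemma vell_eq_linearCombination (f : V →₀ ℝ) : vell f = linearCombination ℝ id f :=
  (linearCombination_apply ℝ f).symm

lemma ell_sub (f g : V →₀ ℝ) : ell (f - g) = ell f - ell g := by
  simp only [ell_eq_linearCombination, map_sub]

lemma vell_sub (f g : V →₀ ℝ) : vell (f - g) = vell f - vell g := by
  simp only [vell_eq_linearCombination, map_sub]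

lemma ell_smul (t : ℝ) (f : V →₀ ℝ) : ell (t • f) = t * ell f := by
  simp only [ell_eq_linearCombination, map_smul, smul_eq_mul]

lemma vell_smul (t : ℝ) (f : V →₀ ℝ) : vell (t • f) = t • vell f := by
  simp only [vell_eq_linearCombination, map_smul]

lemma isFinSupp_posPart {X : Set V} {R : Set ℝ} {h : V →₀ ℝ}
    (hpos : ∀ v, 0 < h v → v ∈ X ∧ h v ∈ R) : IsFinSupp X (Rplus R) h⁺ := by
  have happ : ∀ v, h⁺ v = max (h v) 0 := fun v => by rw [posPart_def, Finsupp.sup_apply]; rfl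
  refine ⟨fun v hv => ?_, fun v => ?_⟩
  · have hv' : max (h v) 0 ≠ 0 := happ v ▸ Finsupp.mem_support_iff.mp hv
    exact (hpos v (lt_of_not_ge fun hle => hv' (max_eq_right hle))).1
  · rw [happ]
    rcases le_or_gt (h v) 0 with hle | hlt
    · exact Or.inr (max_eq_right hle)
    · exact Or.inl ⟨by rw [max_eq_left hlt.le]; exact (hpos v hlt).2,
        Set.mem_Ici.mpr (le_max_right _ _)⟩

/-- Splitting `h` into its positive and negative parts turns the face inequality `ℓ(g) ≤ ℓ(f)`
into `0 ≤ ℓ(h)`. -/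
theorem IsPosWeakFace.ell_nonneg {X Y : Set V} {R : Set ℝ} (hface : IsPosWeakFace X Y R)
    {h : V →₀ ℝ} (hpos : ∀ v, 0 < h v → v ∈ X ∧ h v ∈ R)
    (hneg : ∀ v, h v < 0 → v ∈ Y ∧ -h v ∈ R) (hvell : vell h = 0) : 0 ≤ ell h := by
  have hneg' : ∀ v, 0 < (-h) v → v ∈ Y ∧ (-h) v ∈ R := fun v hv =>
    hneg v (neg_pos.mp hv)
  have hsplit : h⁺ - h⁻ = h := posPart_sub_negPart h
  rw [← posPart_neg] at hsplit
  have hvell' : vell h⁺ = vell (-h)⁺ := by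
    rw [← sub_eq_zero, ← vell_sub, hsplit, hvell]
  have hle := (hface _ _ (isFinSupp_posPart hpos) (isFinSupp_posPart hneg') hvell').1
  rw [← hsplit, ell_sub]
  exact sub_nonneg.mpr hle

end WeakFace

section LowerComb

variable {V : Type*} [AddCommGroup V]

noncomputable def lowerComb (lam : V) (Δ : Finset V) (e : V → ℝ) : V →₀ ℝ :=
  single lam (1 - ∑ α ∈ Δ, e α) + ∑ α ∈ Δ, single (lam - α) (e α)

variable (lam : V) (Δ : Finset V) (e : V → ℝ)

lemma ell_lowerComb [Module ℝ V] : ell (lowerComb lam Δ e) = 1 := by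
  simp [lowerComb, ell_eq_linearCombination]

lemma vell_lowerComb [Module ℝ V] : vell (lowerComb lam Δ e) = lam - ∑ α ∈ Δ, e α • α := by
  simp only [lowerComb, vell_eq_linearCombination, map_add, map_sum, linearCombination_single,
    id, smul_sub, Finset.sum_sub_distrib, ← Finset.sum_smul, sub_smul, one_smul]
  abel

lemma lowerComb_apply [DecidableEq V] (v : V) :
    lowerComb lam Δ e v =
      (if lam = v then 1 - ∑ α ∈ Δ, e α else 0) + ∑ α ∈ Δ, if lam - α = v then e α else 0 := by
  simp only [lowerComb, Finsupp.add_apply, Finsupp.finsetSum_apply, single_apply]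

lemma lowerComb_apply_of_ne [DecidableEq V] {v : V} (hv : v ≠ lam) :
    lowerComb lam Δ e v = ∑ α ∈ Δ, if lam - α = v then e α else 0 := by
  rw [lowerComb_apply, if_neg (Ne.symm hv), zero_add]

lemma exists_sub_eq_of_lowerComb_apply_ne_zero {v : V} (hv : v ≠ lam)
    (h : lowerComb lam Δ e v ≠ 0) : ∃ α ∈ Δ, lam - α = v := by
  classical
  rw [lowerComb_apply_of_ne lam Δ e hv] at h
  obtain ⟨α, hα, hne⟩ := Finset.exists_ne_zero_of_sum_ne_zero h
  exact ⟨α, hα, of_not_not fun hα' => hne (if_neg hα')⟩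

lemma exists_sub_eq_of_lowerComb_apply_pos {v : V} (hv : v ≠ lam)
    (h : 0 < lowerComb lam Δ e v) : ∃ α ∈ Δ, lam - α = v ∧ 0 < e α := by
  classical
  rw [lowerComb_apply_of_ne lam Δ e hv] at h
  by_contra! hcon
  refine (Finset.sum_nonpos fun α hα => ?_).not_gt h
  split_ifs with hα'
  · exact hcon α hα hα'
  · exact le_rfl

lemma mul_lowerComb_apply_mem {A : AddSubgroup ℝ} {t : ℝ} (ht : t ∈ A)
    (he : ∀ α ∈ Δ, t * e α ∈ A) (v : V) : t * lowerComb lam Δ e v ∈ A := by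
  classical
  have hsum : t * ∑ α ∈ Δ, e α ∈ A := by
    rw [Finset.mul_sum]; exact AddSubgroup.sum_mem _ he
  rw [lowerComb_apply, mul_add, Finset.mul_sum]
  refine add_mem ?_ (AddSubgroup.sum_mem _ fun α hα => ?_)
  · split_ifs
    · rw [mul_sub, mul_one]; exact sub_mem ht hsum
    · rw [mul_zero]; exact zero_mem _
  · split_ifs
    · exact he α hα
    · rw [mul_zero]; exact zero_mem _

end LowerComb

theorem statement18_general {V : Type*} [AddCommGroup V] [Module ℝ V]
    (Δ : Finset V)
    (𝔸 : AddSubgroup ℝ)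
    (a : ℝ) (ha𝔸 : a ∈ 𝔸) (ha0 : a ≠ 0) (hmul : ∀ x ∈ 𝔸, a * x ∈ 𝔸)
    (J : Finset V)
    (e : V → ℝ) (he : ∀ α ∈ Δ, e α ∈ 𝔸) (heneg : ∀ α ∈ Δ, α ∉ J → e α ≤ 0)
    (lam : V) (hlam : lam = ∑ α ∈ Δ, e α • α)
    (X : Set V)
    (hlamX : lam ∈ X) (hstep : ∀ α ∈ Δ, lam - α ∈ X) :
    ¬ IsPosWeakFace X
        (X ∩ {x : V | ∃ q ∈ AddSubmonoid.closure (J : Set V), x = lam - q})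
        (𝔸 : Set ℝ) := by
  intro hface
  obtain ⟨t, ht0, htA, htmul⟩ : ∃ t < 0, t ∈ 𝔸 ∧ ∀ x ∈ 𝔸, t * x ∈ 𝔸 :=
    ⟨-(a * a), neg_neg_of_pos (mul_self_pos.mpr ha0), neg_mem (hmul a ha𝔸),
      fun x hx => by simpa only [neg_mul, mul_assoc] using neg_mem (hmul _ (hmul x hx))⟩
  have hval := mul_lowerComb_apply_mem lam Δ e htA fun α hα => htmul _ (he α hα)
  have hnonneg := hface.ell_nonneg (h := t • lowerComb lam Δ e) (fun v hv => ?_) (fun v hv => ?_)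
    (by rw [vell_smul, vell_lowerComb, ← hlam, sub_self, smul_zero])
  · rw [ell_smul, ell_lowerComb, mul_one] at hnonneg
    exact absurd hnonneg (not_le.mpr ht0)
  · refine ⟨?_, hval v⟩
    by_cases hv' : v = lam
    · rw [hv']; exact hlamX
    obtain ⟨α, hα, rfl⟩ := exists_sub_eq_of_lowerComb_apply_ne_zero lam Δ e hv'
      (neg_of_mul_pos_right hv ht0.le).ne
    exact hstep α hα
  · refine ⟨?_, neg_mem (hval v)⟩
    by_cases hv' : v = lam
    · rw [hv']; exact ⟨hlamX, 0, zero_mem _, (sub_zero lam).symm⟩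
    obtain ⟨α, hα, rfl, heα⟩ := exists_sub_eq_of_lowerComb_apply_pos lam Δ e hv'
      (pos_of_mul_neg_right hv ht0.le)
    have hαJ : α ∈ J := of_not_not fun hαJ => (heneg α hα hαJ).not_gt heα
    exact ⟨hstep α hα, α, AddSubmonoid.subset_closure hαJ, rfl⟩

/-- Suppose `a·𝔸 ⊆ 𝔸` for some nonzero `a ∈ 𝔸`, and
`λ = Σ_{α∈Δ} e_α α` with all `e_α ∈ 𝔸` and `e_α ≤ 0` for `α ∈ Δ ∖ J`. If
`X ⊆ λ − ℤ₊Δ` contains `λ` and `λ − α` for every `α ∈ Δ`, then `X ∩ (λ − ℤ₊J)`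
is NOT a positive weak `𝔸`-face of `X`. -/
theorem statement18 {V : Type*} [AddCommGroup V] [Module ℝ V]
    (Δ : Finset V)
    (hind : LinearIndependent ℝ (fun x : (Δ : Set V) => (x : V)))
    (𝔸 : AddSubgroup ℝ) (h𝔸 : 𝔸 ≠ ⊥)
    (a : ℝ) (ha𝔸 : a ∈ 𝔸) (ha0 : a ≠ 0) (hmul : ∀ x ∈ 𝔸, a * x ∈ 𝔸)
    (J : Finset V) (hJ : J ⊆ Δ)
    (e : V → ℝ) (he : ∀ α ∈ Δ, e α ∈ 𝔸) (heneg : ∀ α ∈ Δ, α ∉ J → e α ≤ 0)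
    (lam : V) (hlam : lam = ∑ α ∈ Δ, e α • α)
    (X : Set V)
    (hX : X ⊆ {x : V | ∃ q ∈ AddSubmonoid.closure (Δ : Set V), x = lam - q})
    (hlamX : lam ∈ X) (hstep : ∀ α ∈ Δ, lam - α ∈ X) :
    ¬ IsPosWeakFace X
        (X ∩ {x : V | ∃ q ∈ AddSubmonoid.closure (J : Set V), x = lam - q})
        (𝔸 : Set ℝ) :=
  statement18_general Δ 𝔸 a ha𝔸 ha0 hmul J e he heneg lam hlam X hlamX hstep
end
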